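/- Let Ω be a quasi-product with connected quasi-factors Λ and Γ, and suppose θ: Ω → Λ × Γ is a k-graph isomorphism. Then θ maps each component Ω₂^x (x ∈ Λ⁰) into {y} × Γ for a single y ∈ Λ⁰, and each component Ω₁^w (w ∈ Γ⁰) into Λ × {z} for a single z ∈ Γ⁰. -/

import Mathlib

/-- An edge-colored directed graph with `k` colors. -/
structure ColoredGraph (k : ℕ) where
  V : Type
  E : Type
  es : E → V
  er : E → V
  color : E → Fin k

namespace ColoredGraph

variable {k k₁ k₂ : ℕ}

/-- A (possibly empty) path in a colored graph: a base (source) vertex together with a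
composable list of edges, listed from the range end (head of the list is the last edge
traversed). -/
structure Pth (G : ColoredGraph k) where
  base : G.V
  edges : List G.E
  chain : edges.Chain' fun e f => G.es e = G.er f
  base_src : ∀ e ∈ edges.getLast?, G.es e = base

namespace Pth

variable {G : ColoredGraph k}

/-- The source of a path. -/
def s (p : G.Pth) : G.V := p.base

/-- The range of a path. -/
def r (p : G.Pth) : G.V := (p.edges.head?.map G.er).getD p.base

/-- The color order of a path. -/
def colors (p : G.Pth) : List (Fin k) := p.edges.map G.color

end Pth

/-- `G.IsComp p q pq` means that `pq` is the composite path "first `q`, then `p`"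
(written `pq = p q` in range-on-the-left notation). -/
def IsComp (G : ColoredGraph k) (p q pq : G.Pth) : Prop :=
  p.s = q.r ∧ pq.base = q.base ∧ pq.edges = p.edges ++ q.edges

/-- A factorization rule on the path category of a colored graph: a source-, range- and
color-order-compatible equivalence relation which respects composition (KG0) and such that
every equivalence class contains exactly one path of each permuted color order (KG4).
The quotient is then a `k`-graph. -/
structure FactRule (G : ColoredGraph k) where
  rel : G.Pth → G.Pth → Prop
  iseqv : Equivalence rel
  s_eq : ∀ p q, rel p q → p.s = q.s
  r_eq : ∀ p q, rel p q → p.r = q.r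
  kg0 : ∀ p p' q q' pq p'q', rel p p' → rel q q' →
    G.IsComp p q pq → G.IsComp p' q' p'q' → rel pq p'q'
  kg4 : ∀ (p : G.Pth) (l : List (Fin k)), l.Perm p.colors →
    ∃! q : G.Pth, rel p q ∧ q.colors = l

/-- The Cartesian (box) product of colored graphs. -/
def prodG (G₁ : ColoredGraph k₁) (G₂ : ColoredGraph k₂) : ColoredGraph (k₁ + k₂) where
  V := G₁.V × G₂.V
  E := G₁.E × G₂.V ⊕ G₁.V × G₂.E
  es e := match e with
    | .inl (e, w) => (G₁.es e, w)
    | .inr (v, f) => (v, G₂.es f)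
  er e := match e with
    | .inl (e, w) => (G₁.er e, w)
    | .inr (v, f) => (v, G₂.er f)
  color e := match e with
    | .inl (e, _) => Fin.castAdd k₂ (G₁.color e)
    | .inr (_, f) => Fin.natAdd k₁ (G₂.color f)

/-- The lift of a path of `G₁` to the slice `G₁ × {w}` of the product graph. -/
def lift₁ {G₁ : ColoredGraph k₁} {G₂ : ColoredGraph k₂} (w : G₂.V) (p : G₁.Pth) :
    (prodG G₁ G₂).Pth where
  base := (p.base, w)
  edges := p.edges.map fun e => Sum.inl (e, w)
  chain := by
    show List.IsChain (fun e f : G₁.E × G₂.V ⊕ G₁.V × G₂.E =>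
      (prodG G₁ G₂).es e = (prodG G₁ G₂).er f) (List.map (fun e => Sum.inl (e, w)) p.edges)
    rw [List.isChain_map]
    refine List.IsChain.imp ?_ p.chain
    intro a b h
    show ((G₁.es a, w) : G₁.V × G₂.V) = (G₁.er b, w)
    rw [h]
  base_src := by
    show ∀ e : G₁.E × G₂.V ⊕ G₁.V × G₂.E, e ∈ (List.map (fun e => Sum.inl (e, w)) p.edges).getLast? →
      (prodG G₁ G₂).es e = (p.base, w)
    intro e he
    rw [Option.mem_def] at he
    rw [List.getLast?_map, Option.map_eq_some_iff] at he
    obtain ⟨a, ha, rfl⟩ := he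
    show ((G₁.es a, w) : G₁.V × G₂.V) = (p.base, w)
    rw [p.base_src a ha]

/-- The lift of a path of `G₂` to the slice `{x} × G₂` of the product graph. -/
def lift₂ {G₁ : ColoredGraph k₁} {G₂ : ColoredGraph k₂} (x : G₁.V) (q : G₂.Pth) :
    (prodG G₁ G₂).Pth where
  base := (x, q.base)
  edges := q.edges.map fun f => Sum.inr (x, f)
  chain := by
    show List.IsChain (fun e f : G₁.E × G₂.V ⊕ G₁.V × G₂.E =>
      (prodG G₁ G₂).es e = (prodG G₁ G₂).er f) (List.map (fun f => Sum.inr (x, f)) q.edges)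
    rw [List.isChain_map]
    refine List.IsChain.imp ?_ q.chain
    intro a b h
    show ((x, G₂.es a) : G₁.V × G₂.V) = (x, G₂.er b)
    rw [h]
  base_src := by
    show ∀ e : G₁.E × G₂.V ⊕ G₁.V × G₂.E, e ∈ (List.map (fun f => Sum.inr (x, f)) q.edges).getLast? →
      (prodG G₁ G₂).es e = (x, q.base)
    intro e he
    rw [Option.mem_def] at he
    rw [List.getLast?_map, Option.map_eq_some_iff] at he
    obtain ⟨a, ha, rfl⟩ := he
    show ((x, G₂.es a) : G₁.V × G₂.V) = (x, q.base)
    rw [q.base_src a ha]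

/-- The underlying undirected graph is connected. -/
def Connected (G : ColoredGraph k) : Prop :=
  ∀ a b : G.V,
    Relation.ReflTransGen
      (fun u v => ∃ e : G.E, (G.es e = u ∧ G.er e = v) ∨ (G.es e = v ∧ G.er e = u)) a b

/-- Row-finiteness at the level of the one-skeleton: for each vertex and color order there
are only finitely many paths into that vertex with that color order. -/
def RowFinite (G : ColoredGraph k) : Prop :=
  ∀ (v : G.V) (l : List (Fin k)), {p : G.Pth | p.r = v ∧ p.colors = l}.Finite

/-- A vertex-fixing automorphism of a colored graph. -/
def VertexFixingAut (G : ColoredGraph k) (F : G.E → G.E) : Prop :=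
  Function.Bijective F ∧
    ∀ e, G.es (F e) = G.es e ∧ G.er (F e) = G.er e ∧ G.color (F e) = G.color e

end ColoredGraph

open ColoredGraph

/-- A quasi-product `(k₁+k₂)`-graph: its one-skeleton is the product of the one-skeletons of
`Λ = (G₁, rLam)` and `Γ = (G₂, rGam)`, i.e. the quasi-product is given by a factorization
rule `rOmega` on the product graph; the quasi-factors embed as the slices at `base₂`
resp. `base₁` (the injective degree-compatible functors `ψ₁, ψ₂`). -/
structure QuasiProduct (k₁ k₂ : ℕ) where
  G₁ : ColoredGraph k₁
  G₂ : ColoredGraph k₂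
  rLam : G₁.FactRule
  rGam : G₂.FactRule
  rOmega : (prodG G₁ G₂).FactRule
  base₁ : G₁.V
  base₂ : G₂.V
  emb₁ : ∀ p q : G₁.Pth, rLam.rel p q ↔ rOmega.rel (lift₁ base₂ p) (lift₁ base₂ q)
  emb₂ : ∀ p q : G₂.Pth, rGam.rel p q ↔ rOmega.rel (lift₂ base₁ p) (lift₂ base₁ q)

variable {k₁ k₂ : ℕ}

/-- `ActsTo R p q q' p'` expresses, for a factorization rule `R` on the product graph, that
the Zappa–Szép actions of the associated matched pair satisfy `p ▷ q = q'` and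
`q ◁ p = p'`; that is, `([p], r q)(s p, [q]) = (r p, [q'])([p'], s q)`, with `q'` and `p'`
of the same color order as `q` and `p`. -/
def ActsTo {G₁ : ColoredGraph k₁} {G₂ : ColoredGraph k₂}
    (R : (prodG G₁ G₂).FactRule) (p : G₁.Pth) (q : G₂.Pth)
    (q' : G₂.Pth) (p' : G₁.Pth) : Prop :=
  ∃ lhs rhs : (prodG G₁ G₂).Pth,
    (prodG G₁ G₂).IsComp (lift₁ q.r p) (lift₂ p.s q) lhs ∧
    (prodG G₁ G₂).IsComp (lift₂ p.r q') (lift₁ q.s p') rhs ∧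
    R.rel lhs rhs ∧ q'.colors = q.colors ∧ p'.colors = p.colors

/-- The quasi-factor `Γ` of a quasi-product is *stable* if the left action is trivial:
`p ▷ q = q` for all paths. -/
def QuasiProduct.Stable (Q : QuasiProduct k₁ k₂) : Prop :=
  ∀ (p : Q.G₁.Pth) (q q' : Q.G₂.Pth) (p' : Q.G₁.Pth),
    ActsTo Q.rOmega p q q' p' → q' = q

/-- The factorization rule of the slice `Ω₁^w`, i.e. the rule induced on `G₁`-paths by the
slice `G₁ × {w}` of the quasi-product. -/
def QuasiProduct.relAt₁ (Q : QuasiProduct k₁ k₂) (w : Q.G₂.V) (p p' : Q.G₁.Pth) : Prop :=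
  Q.rOmega.rel (lift₁ w p) (lift₁ w p')

/-- The factorization rule of the slice `Ω₂^x`. -/
def QuasiProduct.relAt₂ (Q : QuasiProduct k₁ k₂) (x : Q.G₁.V) (q q' : Q.G₂.Pth) : Prop :=
  Q.rOmega.rel (lift₂ x q) (lift₂ x q')

/-- `F` implements a (vertex- and color-preserving) isomorphism from the quotient
`k`-graph `G*/R` to `G*/S`. -/
def RelIsoVia (G : ColoredGraph k) (R S : G.Pth → G.Pth → Prop) (F : G.Pth → G.Pth) :
    Prop :=
  (∀ p, (F p).s = p.s ∧ (F p).r = p.r ∧ (F p).colors = p.colors) ∧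
  (∀ p p', R p p' ↔ S (F p) (F p')) ∧
  (∀ p', ∃ p, S (F p) p') ∧
  (∀ p1 p2 p c, G.IsComp p1 p2 p → G.IsComp (F p1) (F p2) c → S (F p) c)

/-- An isomorphism of the `k`-graphs determined by two factorization rules on the same
colored graph, given by a vertex bijection `θV` and a map on paths `θP`. -/
def IsoOfRules {k : ℕ} (G : ColoredGraph k) (R S : G.FactRule)
    (θV : G.V → G.V) (θP : G.Pth → G.Pth) : Prop :=
  Function.Bijective θV ∧
  (∀ p, (θP p).s = θV p.s ∧ (θP p).r = θV p.r ∧ (θP p).colors = p.colors) ∧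
  (∀ p p', R.rel p p' ↔ S.rel (θP p) (θP p')) ∧
  (∀ q, ∃ p, S.rel (θP p) q) ∧
  (∀ p1 p2 p c, G.IsComp p1 p2 p → G.IsComp (θP p1) (θP p2) c → S.rel (θP p) c)

/-- `S` is the product factorization rule of `Λ = (G₁, rLam)` and `Γ = (G₂, rGam)`: its
slices are given by the factor rules and both Zappa–Szép actions are trivial. -/
def IsProductRule (G₁ : ColoredGraph k₁) (G₂ : ColoredGraph k₂)
    (rLam : G₁.FactRule) (rGam : G₂.FactRule) (S : (prodG G₁ G₂).FactRule) : Prop :=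
  (∀ (w : G₂.V) (p p' : G₁.Pth), rLam.rel p p' ↔ S.rel (lift₁ w p) (lift₁ w p')) ∧
  (∀ (x : G₁.V) (q q' : G₂.Pth), rGam.rel q q' ↔ S.rel (lift₂ x q) (lift₂ x q')) ∧
  (∀ (p : G₁.Pth) (q q' : G₂.Pth) (p' : G₁.Pth),
    ActsTo S p q q' p' → q' = q ∧ p' = p)

/-!
A `k`-graph isomorphism `θ` preserves degrees, so it maps a path of `Ω` whose edges all carry
`Γ`-colours to a path of the product one-skeleton made of `Γ`-edges only, and such a path lies in
a single slice `{y} × Γ`. Applied to the edges of `Γ`, this shows that the `Λ⁰`-coordinate of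
`θ(x, ·)` is the same at both ends of every edge, hence constant on the connected `Γ`.
-/

namespace ColoredGraph

def Pth.ofEdge {k : ℕ} {G : ColoredGraph k} (e : G.E) : G.Pth where
  base := G.es e
  edges := [e]
  chain := List.isChain_singleton e
  base_src := by simp

def CommutesWithSRD {k : ℕ} {G : ColoredGraph k} (θV : G.V → G.V) (θP : G.Pth → G.Pth) :
    Prop :=
  ∀ p, (θP p).s = θV p.s ∧ (θP p).r = θV p.r ∧ (θP p).colors = p.colors

theorem Connected.apply_eq {k : ℕ} {G : ColoredGraph k} {β : Type*} (hG : G.Connected)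
    {g : G.V → β} (hg : ∀ e, g (G.es e) = g (G.er e)) (a b : G.V) : g a = g b := by
  induction hG a b with
  | refl => rfl
  | tail _ hstep ih =>
    obtain ⟨e, ⟨rfl, rfl⟩ | ⟨rfl, rfl⟩⟩ := hstep
    exacts [ih.trans (hg e), ih.trans (hg e).symm]

variable {G₁ : ColoredGraph k₁} {G₂ : ColoredGraph k₂}

theorem lift₁_s (w : G₂.V) (p : G₁.Pth) : (lift₁ w p).s = (p.s, w) := rfl

theorem lift₂_s (x : G₁.V) (q : G₂.Pth) : (lift₂ x q).s = (x, q.s) := rfl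

theorem lift₁_r (w : G₂.V) (p : G₁.Pth) : (lift₁ w p).r = (p.r, w) := by
  obtain ⟨_, _ | _, _, _⟩ := p <;> rfl

theorem lift₂_r (x : G₁.V) (q : G₂.Pth) : (lift₂ x q).r = (x, q.r) := by
  obtain ⟨_, _ | _, _, _⟩ := q <;> rfl

theorem lift₁_colors (w : G₂.V) (p : G₁.Pth) :
    (lift₁ w p).colors = p.colors.map (Fin.castAdd k₂) := by
  simp [Pth.colors, lift₁, prodG]

theorem lift₂_colors (x : G₁.V) (q : G₂.Pth) :
    (lift₂ x q).colors = q.colors.map (Fin.natAdd k₁) := by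
  simp [Pth.colors, lift₂, prodG]

theorem exists_eq_lift₁ (P : (prodG G₁ G₂).Pth) (h : ∀ c ∈ P.colors, c.val < k₁) :
    ∃ w p, P = lift₁ w p := by
  obtain ⟨⟨x, w⟩, edges, chain, base_src⟩ := P
  have hhor : ∀ e ∈ edges, ∃ f u, e = .inl (f, u) := by
    rintro (⟨f, u⟩ | ⟨_, g⟩) he
    · exact ⟨f, u, rfl⟩
    · exact absurd (h _ (List.mem_map_of_mem he)) (not_lt.2 (Nat.le_add_right _ _))
  -- Induct backwards from the source: a `Λ`-edge leaves the `Γ⁰`-coordinate unchanged.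
  have hslice : ∀ e ∈ edges, e ∈ Set.range fun f => Sum.inl (f, w) := by
    refine (List.IsChain.iff_mem.1 chain).backwards_induction _ _ ?_ ?_
    · rintro e _ ⟨he, -, hsrc⟩ ⟨g, rfl⟩
      obtain ⟨f, u, rfl⟩ := hhor e he
      obtain rfl : u = w := congrArg Prod.snd hsrc
      exact ⟨f, rfl⟩
    · intro hne
      obtain ⟨f, u, hlast⟩ := hhor _ (List.getLast_mem hne)
      have hsrc := base_src _ (List.getLast?_eq_some_getLast hne)
      rw [hlast] at hsrc
      obtain rfl : u = w := congrArg Prod.snd hsrc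
      exact ⟨f, hlast.symm⟩
  obtain ⟨L, rfl⟩ : edges ∈ Set.range (List.map fun f => Sum.inl (f, w)) := by
    rw [Set.range_list_map]
    exact hslice
  refine ⟨w, ⟨x, L, ?_, ?_⟩, rfl⟩
  · exact ((List.isChain_map _).1 chain).imp fun _ _ h => congrArg Prod.fst h
  · intro f hf
    exact congrArg Prod.fst (base_src _ (List.getLast?_map ▸ Option.mem_map_of_mem _ hf))

theorem exists_eq_lift₂ (P : (prodG G₁ G₂).Pth) (h : ∀ c ∈ P.colors, k₁ ≤ c.val) :
    ∃ x q, P = lift₂ x q := by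
  obtain ⟨⟨x, w⟩, edges, chain, base_src⟩ := P
  have hvert : ∀ e ∈ edges, ∃ v f, e = .inr (v, f) := by
    rintro (⟨a, _⟩ | ⟨v, f⟩) he
    · exact absurd (h _ (List.mem_map_of_mem he)) (not_le.2 (G₁.color a).isLt)
    · exact ⟨v, f, rfl⟩
  have hslice : ∀ e ∈ edges, e ∈ Set.range fun f => Sum.inr (x, f) := by
    refine (List.IsChain.iff_mem.1 chain).backwards_induction _ _ ?_ ?_
    · rintro e _ ⟨he, -, hsrc⟩ ⟨g, rfl⟩
      obtain ⟨v, f, rfl⟩ := hvert e he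
      obtain rfl : v = x := congrArg Prod.fst hsrc
      exact ⟨f, rfl⟩
    · intro hne
      obtain ⟨v, f, hlast⟩ := hvert _ (List.getLast_mem hne)
      have hsrc := base_src _ (List.getLast?_eq_some_getLast hne)
      rw [hlast] at hsrc
      obtain rfl : v = x := congrArg Prod.fst hsrc
      exact ⟨f, hlast.symm⟩
  obtain ⟨L, rfl⟩ : edges ∈ Set.range (List.map fun f => Sum.inr (x, f)) := by
    rw [Set.range_list_map]
    exact hslice
  refine ⟨x, ⟨w, L, ?_, ?_⟩, rfl⟩
  · exact ((List.isChain_map _).1 chain).imp fun _ _ h => congrArg Prod.snd h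
  · intro f hf
    exact congrArg Prod.snd (base_src _ (List.getLast?_map ▸ Option.mem_map_of_mem _ hf))

section DegreePreserving

variable {θV : (prodG G₁ G₂).V → (prodG G₁ G₂).V}
  {θP : (prodG G₁ G₂).Pth → (prodG G₁ G₂).Pth}

theorem exists_map_lift₁_eq_lift₁ (hθ : CommutesWithSRD θV θP) (w : G₂.V) (p : G₁.Pth) :
    ∃ p', θP (lift₁ w p) = lift₁ (θV (p.s, w)).2 p' := by
  obtain ⟨hs, -, hcolors⟩ := hθ (lift₁ w p)
  obtain ⟨w', p', hp'⟩ :=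
    exists_eq_lift₁ (θP (lift₁ w p)) (by simp [hcolors, lift₁_colors])
  rw [hp', lift₁_s] at hs
  obtain rfl : w' = (θV (p.s, w)).2 := congrArg Prod.snd hs
  exact ⟨p', hp'⟩

theorem exists_map_lift₂_eq_lift₂ (hθ : CommutesWithSRD θV θP) (x : G₁.V) (q : G₂.Pth) :
    ∃ q', θP (lift₂ x q) = lift₂ (θV (x, q.s)).1 q' := by
  obtain ⟨hs, -, hcolors⟩ := hθ (lift₂ x q)
  obtain ⟨x', q', hq'⟩ :=
    exists_eq_lift₂ (θP (lift₂ x q)) (by simp [hcolors, lift₂_colors])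
  rw [hq', lift₂_s] at hs
  obtain rfl : x' = (θV (x, q.s)).1 := congrArg Prod.fst hs
  exact ⟨q', hq'⟩

theorem snd_map_s_eq_snd_map_r (hθ : CommutesWithSRD θV θP) (w : G₂.V) (p : G₁.Pth) :
    (θV (p.s, w)).2 = (θV (p.r, w)).2 := by
  obtain ⟨p', hp'⟩ := exists_map_lift₁_eq_lift₁ hθ w p
  have hr := (hθ (lift₁ w p)).2.1
  rw [hp', lift₁_r, lift₁_r] at hr
  exact (congrArg Prod.snd hr :)

theorem fst_map_s_eq_fst_map_r (hθ : CommutesWithSRD θV θP) (x : G₁.V) (q : G₂.Pth) :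
    (θV (x, q.s)).1 = (θV (x, q.r)).1 := by
  obtain ⟨q', hq'⟩ := exists_map_lift₂_eq_lift₂ hθ x q
  have hr := (hθ (lift₂ x q)).2.1
  rw [hq', lift₂_r, lift₂_r] at hr
  exact (congrArg Prod.fst hr :)

theorem snd_map_eq_of_connected (hθ : CommutesWithSRD θV θP) (hc : G₁.Connected)
    (w : G₂.V) (u v : G₁.V) :
    (θV (u, w)).2 = (θV (v, w)).2 :=
  hc.apply_eq (g := fun u => (θV (u, w)).2)
    (fun e => snd_map_s_eq_snd_map_r hθ w (.ofEdge e)) u v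

theorem fst_map_eq_of_connected (hθ : CommutesWithSRD θV θP) (hc : G₂.Connected)
    (x : G₁.V) (u v : G₂.V) :
    (θV (x, u)).1 = (θV (x, v)).1 :=
  hc.apply_eq (g := fun u => (θV (x, u)).1)
    (fun e => fst_map_s_eq_fst_map_r hθ x (.ofEdge e)) u v

end DegreePreserving

end ColoredGraph

open ColoredGraph in
theorem stmt17_general {k₁ k₂ : ℕ} (Q : QuasiProduct k₁ k₂)
    (hc₁ : Connected Q.G₁) (hc₂ : Connected Q.G₂)
    (S : (prodG Q.G₁ Q.G₂).FactRule)
    (θV : (prodG Q.G₁ Q.G₂).V → (prodG Q.G₁ Q.G₂).V)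
    (θP : (prodG Q.G₁ Q.G₂).Pth → (prodG Q.G₁ Q.G₂).Pth)
    (hθ : IsoOfRules (prodG Q.G₁ Q.G₂) Q.rOmega S θV θP) :
    (∀ x : Q.G₁.V, ∃ y : Q.G₁.V, ∀ q : Q.G₂.Pth, ∃ q2 : Q.G₂.Pth,
      S.rel (θP (lift₂ x q)) (lift₂ y q2)) ∧
    (∀ w : Q.G₂.V, ∃ z : Q.G₂.V, ∀ p : Q.G₁.Pth, ∃ p2 : Q.G₁.Pth,
      S.rel (θP (lift₁ w p)) (lift₁ z p2)) := by
  have hdeg : CommutesWithSRD θV θP := hθ.2.1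
  refine ⟨fun x => ⟨(θV (x, Q.base₂)).1, fun q => ?_⟩,
    fun w => ⟨(θV (Q.base₁, w)).2, fun p => ?_⟩⟩
  · obtain ⟨q', hq'⟩ := exists_map_lift₂_eq_lift₂ hdeg x q
    rw [hq', fst_map_eq_of_connected hdeg hc₂ x q.s Q.base₂]
    exact ⟨q', S.iseqv.refl _⟩
  · obtain ⟨p', hp'⟩ := exists_map_lift₁_eq_lift₁ hdeg w p
    rw [hp', snd_map_eq_of_connected hdeg hc₁ w p.s Q.base₁]
    exact ⟨p', S.iseqv.refl _⟩

open ColoredGraph in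
/-- Let `Ω` be a quasi-product with connected quasi-factors `Λ` and `Γ`,
and suppose `θ = (θV, θP) : Ω → Λ × Γ` is a `k`-graph isomorphism onto the product
`k`-graph (given by a product factorization rule `S`). Then `θ` maps each component
`Ω₂^x` into `{y} × Γ` for a single `y ∈ Λ⁰`, and each component `Ω₁^w` into `Λ × {z}`
for a single `z ∈ Γ⁰`. -/
theorem stmt17 {k₁ k₂ : ℕ} (Q : QuasiProduct k₁ k₂)
    (hc₁ : Connected Q.G₁) (hc₂ : Connected Q.G₂)
    (S : (prodG Q.G₁ Q.G₂).FactRule)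
    (hS : IsProductRule Q.G₁ Q.G₂ Q.rLam Q.rGam S)
    (θV : (prodG Q.G₁ Q.G₂).V → (prodG Q.G₁ Q.G₂).V)
    (θP : (prodG Q.G₁ Q.G₂).Pth → (prodG Q.G₁ Q.G₂).Pth)
    (hθ : IsoOfRules (prodG Q.G₁ Q.G₂) Q.rOmega S θV θP) :
    (∀ x : Q.G₁.V, ∃ y : Q.G₁.V, ∀ q : Q.G₂.Pth, ∃ q2 : Q.G₂.Pth,
      S.rel (θP (lift₂ x q)) (lift₂ y q2)) ∧
    (∀ w : Q.G₂.V, ∃ z : Q.G₂.V, ∀ p : Q.G₁.Pth, ∃ p2 : Q.G₁.Pth,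
      S.rel (θP (lift₁ w p)) (lift₁ z p2)) :=
  stmt17_general Q hc₁ hc₂ S θV θP hθ
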